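/- A tracial subalgebra A of M with conditional factorization has the Φ-state property: every state ω of M satisfying ω(Φ(a)) = ω(a) for all a ∈ A satisfies ω(Φ(x)) = ω(x) for all x ∈ M. -/

import Mathlib

/-!
Given a positive invertible `c`, conditional factorization writes `c = a* a` with `a ∈ A` invertible
and `Φ(a) Φ(a⁻¹) = 1`; since a faithful trace makes one-sided inverses two-sided, also
`Φ(a⁻¹) Φ(a) = 1`. Hence `ω(Φ(a⁻¹) a) = ω(Φ(a⁻¹) Φ(a)) = 1`, and the Cauchy–Schwarz inequality for
`ω` together with the Schwarz inequality `Φ(a⁻¹) Φ(a⁻¹)* ≤ Φ(a⁻¹ a⁻¹*) = Φ(c⁻¹)` give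
`1 ≤ ω(c) ω(Φ(c⁻¹))`. For self-adjoint `y` with `Φ(y) = 0` and `c = 1 + t y` this reads
`1 ≤ (1 + t ω(y)) (1 + O(t²))` near `t = 0`, so this function of `t` has a local minimum at `0`
and its derivative `ω(y)` vanishes. Applying this to the real and imaginary parts of `x - Φ(x)`
gives `ω(x - Φ(x)) = 0`.
-/

open scoped ComplexOrder

noncomputable section

variable {H : Type*} [NormedAddCommGroup H] [InnerProductSpace ℂ H] [CompleteSpace H]
variable {M : Type*} [CStarAlgebra M] [PartialOrder M] [StarOrderedRing M]

/-- The image of an element of `M` in `B(H)` endowed with the weak operator topology. -/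
def wot (ι : M →⋆ₐ[ℂ] (H →L[ℂ] H)) (x : M) : H →WOT[ℂ] H :=
  ContinuousLinearMapWOT.ofCLM (ι x)

/-- A functional on `M` is normal if its restriction to the closed unit ball of `M` is
continuous for the weak operator topology. -/
def IsNormalFunctional (ι : M →⋆ₐ[ℂ] (H →L[ℂ] H)) (ω : M → ℂ) : Prop :=
  @Continuous {x : M // ‖x‖ ≤ 1} ℂ
    (TopologicalSpace.induced (fun x => wot ι (x : M)) inferInstance) _
    (fun x => ω (x : M))

/-- A map `M → M` is normal if its restriction to the closed unit ball of `M` is continuous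
from the weak operator topology to the weak operator topology. -/
def IsNormalMap (ι : M →⋆ₐ[ℂ] (H →L[ℂ] H)) (Φ : M → M) : Prop :=
  @Continuous {x : M // ‖x‖ ≤ 1} (H →WOT[ℂ] H)
    (TopologicalSpace.induced (fun x => wot ι (x : M)) inferInstance) _
    (fun x => wot ι (Φ (x : M)))

/-- A tracial subalgebra `A` of the von Neumann algebra `M` (faithfully realized via the
isometric unital `*`-embedding `ι` as a WOT-closed `*`-subalgebra of `B(H)`), together with a
faithful normal tracial state `τ` and the `τ`-preserving conditional expectation `Φ` of `M`
onto the diagonal `D = A ∩ A*`, which is multiplicative on `A`. -/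
structure TracialSubalgebra (ι : M →⋆ₐ[ℂ] (H →L[ℂ] H)) where
  ι_isometry : Isometry ι
  M_wotClosed : IsClosed (Set.range fun x : M => wot ι x)
  τ : M →L[ℂ] ℂ
  τ_pos : ∀ x : M, 0 ≤ x → 0 ≤ τ x
  τ_one : τ 1 = 1
  τ_trace : ∀ x y : M, τ (x * y) = τ (y * x)
  τ_faithful : ∀ x : M, τ (star x * x) = 0 → x = 0
  τ_normal : IsNormalFunctional ι τ
  A : Subalgebra ℂ M
  A_wotClosed : IsClosed ((fun x => wot ι x) '' (A : Set M))
  Φ : M →L[ℂ] M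
  Φ_one : Φ 1 = 1
  Φ_pos : ∀ x : M, 0 ≤ x → 0 ≤ Φ x
  Φ_idem : ∀ x : M, Φ (Φ x) = Φ x
  Φ_range : Set.range Φ = {x : M | x ∈ A ∧ star x ∈ A}
  Φ_bimod : ∀ d x d' : M, d ∈ A → star d ∈ A → d' ∈ A → star d' ∈ A →
      Φ (d * x * d') = d * Φ x * d'
  Φ_normal : IsNormalMap ι Φ
  τ_comp_Φ : ∀ x : M, τ (Φ x) = τ x
  Φ_mult : ∀ a b : M, a ∈ A → b ∈ A → Φ (a * b) = Φ a * Φ b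

namespace TracialSubalgebra

variable {ι : M →⋆ₐ[ℂ] (H →L[ℂ] H)} (T : TracialSubalgebra ι)

/-- The ideal `A₀ = A ∩ ker Φ`, as a set. -/
def Azero : Set M := {a : M | a ∈ T.A ∧ T.Φ a = 0}

/-- The diagonal `D = A ∩ A*`, as a set. -/
def diag : Set M := {x : M | x ∈ T.A ∧ star x ∈ T.A}

/-- The subspace `A + A*`, as a set. -/
def selfAdjSum : Set M := {x : M | ∃ a ∈ T.A, ∃ b ∈ T.A, x = a + star b}

/-- `A` is maximal subdiagonal if `A + A*` is dense in `M` for the weak operator topology. -/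
def MaxSubdiagonal : Prop :=
  ∀ x : M, wot ι x ∈ closure ((fun y => wot ι y) '' T.selfAdjSum)

end TracialSubalgebra

/-- A state of `M`: a positive linear functional taking the value `1` at the unit. -/
def IsStateLin (ω : M →ₗ[ℂ] ℂ) : Prop :=
  (∀ x : M, 0 ≤ x → 0 ≤ ω x) ∧ ω 1 = 1

namespace TracialSubalgebra

variable {ι : M →⋆ₐ[ℂ] (H →L[ℂ] H)} (T : TracialSubalgebra ι)

/-- `A` has conditional factorization: every positive invertible `b ∈ M` is of the form
`b = |a|` for some `a ∈ A` which is invertible in `M` and satisfies `Φ(a)Φ(a⁻¹) = 1`. -/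
def CondFactorization : Prop :=
  ∀ b : M, 0 ≤ b → IsUnit b →
    ∃ a ∈ T.A, ∃ a' : M, a * a' = 1 ∧ a' * a = 1 ∧
      b = CFC.sqrt (star a * a) ∧ T.Φ a * T.Φ a' = 1

end TracialSubalgebra

namespace PositiveLinearMap

theorem norm_apply_star_mul_sq_le (f : M →ₚ[ℂ] ℂ) (a b : M) :
    ‖f (star a * b)‖ ^ 2 ≤ (f (star a * a)).re * (f (star b * b)).re := by
  have hnorm (c : M) : ‖f.toPreGNS c‖ ^ 2 = (f (star c * c)).re := by
    rw [preGNS_norm_def]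
    exact Real.sq_sqrt (f.map_nonneg (star_mul_self_nonneg c)).1
  rw [← hnorm, ← hnorm, ← mul_pow]
  exact pow_le_pow_left₀ (norm_nonneg _) (norm_inner_le_norm (𝕜 := ℂ) (f.toPreGNS a) _) 2

end PositiveLinearMap

theorem isUnit_star_mul_self_of_mul_eq_one {u v : M} (h : u * v = 1) : IsUnit (star v * v) := by
  nontriviality M
  have hs : ‖star u * u‖ ≠ 0 := by
    rw [norm_ne_zero_iff, Ne, CStarRing.star_mul_self_eq_zero_iff]; rintro rfl; simp at h
  have h1 : (1 : M) ≤ ‖star u * u‖ • (star v * v) := by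
    calc (1 : M) = star v * (star u * u) * v := by
          rw [← mul_assoc, mul_assoc _ u, ← star_mul, h, star_one, one_mul]
      _ ≤ star v * algebraMap ℝ M ‖star u * u‖ * v :=
          star_left_conjugate_le_conjugate
            (IsSelfAdjoint.le_algebraMap_norm_self (.star_mul_self u)) v
      _ = ‖star u * u‖ • (star v * v) := by
          rw [Algebra.algebraMap_eq_smul_one, mul_smul_comm, mul_one, smul_mul_assoc]
  exact (isUnit_smul_iff (Units.mk0 _ hs) _).mp (CStarAlgebra.isUnit_of_le 1 h1)

theorem mul_eq_one_comm_of_faithful_trace (τ : M →ₗ[ℂ] ℂ)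
    (hτ : ∀ x y : M, τ (x * y) = τ (y * x)) (hτ_faithful : ∀ x : M, τ (star x * x) = 0 → x = 0)
    {u v : M} (h : u * v = 1) : v * u = 1 := by
  -- `p = v (v*v)⁻¹ v*` is a projection with `τ p = τ 1`, so faithfulness forces `p = 1`.
  obtain ⟨x, hx⟩ := isUnit_star_mul_self_of_mul_eq_one h
  have hx_inv : star (↑x⁻¹ : M) = ↑x⁻¹ := by
    refine Units.eq_inv_of_mul_eq_one_left ?_
    rw [hx, ← (IsSelfAdjoint.star_mul_self v).star_eq, ← star_mul, ← hx, x.inv_mul, star_one]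
  set w : M := ↑x⁻¹ * star v
  have hwv : w * v = 1 := by rw [mul_assoc, ← hx, x.inv_mul]
  have hq : star (1 - v * w) * (1 - v * w) = 1 - v * w := by
    have hp : star (v * w) = v * w := by simp only [w, star_mul, star_star, hx_inv, mul_assoc]
    have hpp : v * w * (v * w) = v * w := by rw [mul_assoc, ← mul_assoc w, hwv, one_mul]
    rw [star_sub, star_one, hp]
    simp only [sub_mul, mul_sub, one_mul, mul_one, hpp, sub_self, sub_zero]
  have hvw : v * w = 1 := by
    refine (sub_eq_zero.mp (hτ_faithful _ ?_)).symm
    rw [hq, map_sub, hτ, hwv, sub_self]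
  have huw : u = w := by
    calc u = u * (v * w) := by rw [hvw, mul_one]
      _ = w := by rw [← mul_assoc, h, one_mul]
  rw [huw, hvw]

open Filter Topology in
theorem eq_zero_of_eventually_one_le_mul {β C : ℝ}
    (h : ∀ᶠ t in 𝓝 0, 1 ≤ (1 + t * β) * (1 + C * t ^ 2)) : β = 0 := by
  have hmin : IsLocalMin (fun t : ℝ => (1 + t * β) * (1 + C * t ^ 2)) 0 := by
    simpa [IsLocalMin, IsMinFilter] using h
  have hderiv : HasDerivAt (fun t : ℝ => (1 + t * β) * (1 + C * t ^ 2)) β 0 := by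
    simpa using (((hasDerivAt_id' (0 : ℝ)).mul_const β).const_add 1).fun_mul
      (((hasDerivAt_pow 2 (0 : ℝ)).const_mul C).const_add 1)
  exact hmin.hasDerivAt_eq_zero hderiv

theorem inv_one_add_le {x : ℝ} (hx : |x| ≤ 1 / 2) : (1 + x)⁻¹ ≤ 1 - x + 2 * x ^ 2 := by
  obtain ⟨hx₁, hx₂⟩ := abs_le.mp hx
  rw [inv_le_iff_one_le_mul₀ (by linarith)]
  nlinarith [sq_nonneg x]

namespace PositiveLinearMap

variable (f : M →ₚ[ℂ] ℂ) (hf : f 1 = 1) (Φ : M →ₚ[ℂ] M) (hΦ : Φ 1 = 1)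
  (h : ∀ c : Mˣ, 0 ≤ (c : M) → 1 ≤ (f c).re * (f (Φ ↑c⁻¹)).re)
include hf hΦ h

theorem one_le_one_add_mul_re_mul_of_map_eq_zero {y : M} (hy : IsSelfAdjoint y)
    (hΦy : Φ y = 0) {t : ℝ} (ht : |t| * ‖y‖ ≤ 1 / 2) :
    1 ≤ (1 + t * (f y).re) * (1 + 2 * ‖y‖ ^ 2 * t ^ 2) := by
  have : Nontrivial M := ⟨⟨1, 0, fun h10 => by simp [h10] at hf⟩⟩
  have hspec : ∀ s ∈ spectrum ℝ y, |t * s| ≤ 1 / 2 ∧ (t * s) ^ 2 ≤ ‖y‖ ^ 2 * t ^ 2 := by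
    intro s hs
    have hs' : |s| ≤ ‖y‖ := spectrum.norm_le_norm_of_mem hs
    refine ⟨?_, ?_⟩
    · rw [abs_mul]; exact (mul_le_mul_of_nonneg_left hs' (abs_nonneg t)).trans ht
    · have := pow_le_pow_left₀ (abs_nonneg s) hs' 2
      rw [sq_abs] at this
      nlinarith [sq_nonneg t]
  have hpos : ∀ s ∈ spectrum ℝ y, 0 < 1 + t * s := fun s hs => by
    linarith [neg_abs_le (t * s), (hspec s hs).1]
  set c := cfcUnits (fun s => 1 + t * s) y (fun s hs => (hpos s hs).ne')
  have hc : (c : M) = algebraMap ℝ M 1 + t • y := by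
    change cfc _ y = _
    rw [cfc_const_add 1 (fun s => t * s) y, cfc_const_mul_id t y]
  have hc_nonneg : 0 ≤ (c : M) := cfc_nonneg fun s hs => (hpos s hs).le
  set r := 1 + 2 * ‖y‖ ^ 2 * t ^ 2
  have hc_inv : (↑c⁻¹ : M) ≤ algebraMap ℝ M r + (-t) • y := by
    calc (↑c⁻¹ : M) = cfc (fun s => (1 + t * s)⁻¹) y := val_inv_cfcUnits ..
      _ ≤ cfc (fun s => r + -t * s) y := by
          refine cfc_mono (fun s hs => ?_)
            (ContinuousOn.inv₀ (by fun_prop) fun s hs => (hpos s hs).ne')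
          linarith [inv_one_add_le (hspec s hs).1, (hspec s hs).2]
      _ = _ := by rw [cfc_const_add _ (fun s => -t * s) y, cfc_const_mul_id (-t) y]
  clear_value r
  have hfc : (f c).re = 1 + t * (f y).re := by simp [hc, hf]
  have hfΦ : (f (Φ ↑c⁻¹)).re ≤ r := by
    have := (Complex.le_def.mp (OrderHomClass.mono f (OrderHomClass.mono Φ hc_inv))).1
    simpa [Algebra.algebraMap_eq_smul_one, hΦ, hΦy, hf] using this
  have hfc_nonneg : 0 ≤ (f c).re := (f.map_nonneg hc_nonneg).1
  have := h c hc_nonneg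
  rw [hfc] at this hfc_nonneg
  nlinarith

open Filter Topology in
theorem apply_eq_zero_of_isSelfAdjoint_of_map_eq_zero {y : M} (hy : IsSelfAdjoint y)
    (hΦy : Φ y = 0) : f y = 0 := by
  have hre : (f y).re = 0 := by
    refine eq_zero_of_eventually_one_le_mul (C := 2 * ‖y‖ ^ 2) ?_
    have hcont : Continuous fun t : ℝ => |t| * ‖y‖ := by fun_prop
    filter_upwards [hcont.tendsto 0 (Iic_mem_nhds (by simp : |(0 : ℝ)| * ‖y‖ < 1 / 2))] with t ht
    exact one_le_one_add_mul_re_mul_of_map_eq_zero f hf Φ hΦ h hy hΦy ht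
  have him : (f y).im = 0 := by
    rw [← Complex.conj_eq_iff_im, ← Complex.star_def, ← map_star, hy.star_eq]
  exact Complex.ext hre him

theorem apply_eq_zero_of_map_eq_zero {z : M} (hΦz : Φ z = 0) : f z = 0 := by
  have hΦ_realPart : Φ (realPart z) = 0 := by simp [realPart_apply_coe, map_star, hΦz]
  have hΦ_imaginaryPart : Φ (imaginaryPart z) = 0 := by
    simp [imaginaryPart_apply_coe, map_star, hΦz]
  rw [← realPart_add_I_smul_imaginaryPart z, map_add, map_smul,
    apply_eq_zero_of_isSelfAdjoint_of_map_eq_zero f hf Φ hΦ h (realPart z).2 hΦ_realPart,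
    apply_eq_zero_of_isSelfAdjoint_of_map_eq_zero f hf Φ hΦ h (imaginaryPart z).2 hΦ_imaginaryPart,
    smul_zero, add_zero]

end PositiveLinearMap

namespace TracialSubalgebra

variable {ι : M →⋆ₐ[ℂ] (H →L[ℂ] H)} (T : TracialSubalgebra ι)

def Φₚ : M →ₚ[ℂ] M := PositiveLinearMap.mk₀ T.Φ.toLinearMap T.Φ_pos

theorem Φ_star (x : M) : T.Φ (star x) = star (T.Φ x) := map_star T.Φₚ x

omit [StarOrderedRing M] in
theorem Φ_mem_diag (x : M) : T.Φ x ∈ T.diag := T.Φ_range.subset ⟨x, rfl⟩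

omit [StarOrderedRing M] in
theorem Φ_mul_left {d : M} (hd : d ∈ T.diag) (x : M) : T.Φ (d * x) = d * T.Φ x := by
  simpa using T.Φ_bimod d x 1 hd.1 hd.2 (one_mem _) (by simp)

omit [StarOrderedRing M] in
theorem Φ_mul_right {d : M} (hd : d ∈ T.diag) (x : M) : T.Φ (x * d) = T.Φ x * d := by
  simpa using T.Φ_bimod 1 x d (one_mem _) (by simp) hd.1 hd.2

omit [StarOrderedRing M] in
theorem star_mem_diag {d : M} (hd : d ∈ T.diag) : star d ∈ T.diag := ⟨hd.2, by simpa using hd.1⟩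

theorem star_Φ_mul_Φ_le (z : M) : star (T.Φ z) * T.Φ z ≤ T.Φ (star z * z) := by
  set d := T.Φ z
  have hd := T.Φ_mem_diag z
  have h0 := T.Φ_pos _ (star_mul_self_nonneg (z - d))
  have hexpand : star (z - d) * (z - d) = star z * z - star z * d - star d * z + star d * d := by
    rw [star_sub]; noncomm_ring
  rw [hexpand, map_add, map_sub, map_sub, T.Φ_mul_right hd, T.Φ_star,
    T.Φ_mul_left (T.star_mem_diag hd), T.Φ_mul_left (T.star_mem_diag hd), T.Φ_idem] at h0
  rw [← sub_nonneg]
  convert h0 using 1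
  abel

theorem one_le_re_mul_re (hT : T.CondFactorization) (f : M →ₚ[ℂ] ℂ) (hf : f 1 = 1)
    (hfA : ∀ a ∈ T.A, f (T.Φ a) = f a) (c : Mˣ) (hc : 0 ≤ (c : M)) :
    1 ≤ (f c).re * (f (T.Φ ↑c⁻¹)).re := by
  have hc' : IsStrictlyPositive (c : M) := c.isUnit.isStrictlyPositive hc
  obtain ⟨a, haA, a', haa', ha'a, hsqrt, hΦa⟩ :=
    hT (CFC.sqrt c) (CFC.sqrt_nonneg _) (IsStrictlyPositive.sqrt (c : M)).isUnit
  have hca : star a * a = c := by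
    rw [← CFC.sqrt_mul_sqrt_self (star a * a), ← hsqrt, CFC.sqrt_mul_sqrt_self (c : M)]
  have hc_inv : ↑c⁻¹ = a' * star a' := by
    refine Units.inv_eq_of_mul_eq_one_right ?_
    rw [← hca, mul_assoc, ← mul_assoc a, haa', one_mul, ← star_mul, ha'a, star_one]
  set q := T.Φ a'
  have hq : q * T.Φ a = 1 :=
    mul_eq_one_comm_of_faithful_trace T.τ.toLinearMap T.τ_trace T.τ_faithful hΦa
  have hfqa : f (q * a) = 1 := by
    rw [← hfA _ (mul_mem (T.Φ_mem_diag a').1 haA), T.Φ_mul_left (T.Φ_mem_diag a'), hq, hf]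
  have hcs := f.norm_apply_star_mul_sq_le (star q) a
  rw [star_star, hfqa, hca, norm_one, one_pow] at hcs
  have hschwarz : q * star q ≤ T.Φ ↑c⁻¹ := by
    simpa [hc_inv, T.Φ_star] using T.star_Φ_mul_Φ_le (star a')
  have hmono := (Complex.le_def.mp (OrderHomClass.mono f hschwarz)).1
  have hfc := (f.map_nonneg hc).1
  exact hcs.trans (mul_le_mul_of_nonneg_right hmono hfc) |>.trans_eq (mul_comm _ _)

/-- A tracial subalgebra of `M` with conditional factorization has the `Φ`-state property:
every state `ω` of `M` with `ω ∘ Φ = ω` on `A` satisfies `ω ∘ Φ = ω` on all of `M`. -/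
theorem phiState_of_condFactorization (hT : T.CondFactorization)
    (ω : M →ₗ[ℂ] ℂ) (hω : IsStateLin ω)
    (hωA : ∀ a ∈ T.A, ω (T.Φ a) = ω a) :
    ∀ x : M, ω (T.Φ x) = ω x := by
  intro x
  set f := PositiveLinearMap.mk₀ ω hω.1
  have hΦ : T.Φ (x - T.Φ x) = 0 := by rw [map_sub, T.Φ_idem, sub_self]
  have h0 : ω (x - T.Φ x) = 0 :=
    f.apply_eq_zero_of_map_eq_zero hω.2 T.Φₚ T.Φ_one (T.one_le_re_mul_re hT f hω.2 hωA) hΦ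
  rw [map_sub, sub_eq_zero] at h0
  exact h0.symm

end TracialSubalgebra
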